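/- In the setting of Proposition zk, for each x ∈ S_⋆ and each sequence ℓ_N with ℓ_N → ∞ and ℓ_N/N → 0, lim_{N→∞} μ_N(η : η_x ≥ N − ℓ_N) = 1/κ_⋆, where μ_N is the zero-range stationary measure. -/

import Mathlib

noncomputable def aZR (α : ℝ) (n : ℕ) : ℝ := if n = 0 then 1 else (n : ℝ) ^ α

def confs (S : Type*) [Fintype S] [DecidableEq S] (N : ℕ) : Finset (S → ℕ) :=
  (Fintype.piFinset fun _ => Finset.range (N + 1)).filter (fun η => ∑ x, η x = N)

/-!
Split a configuration at a site `x` into `η x = k` and `N - k` particles on the other sites. The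
total weight `G_x j` of `j` particles on `S \ {x}` is a Cauchy product of the single-site series,
hence summable, so for `x ∈ S⋆` the event `η x ≥ N - ℓ_N` has weight
`∑_{j ≤ ℓ_N} (N - j)^(-α) G_x j ~ N^(-α) ∑' j, G_x j`, and `∑' j, G_x j` is the same for every
`x ∈ S⋆`. Every configuration has a site `y` with at least `N / |S|` particles. If `y ∉ S⋆` and
`η y ≥ N - ℓ_N`, the weight carries an extra factor `m⋆(y)^(N - ℓ_N)`; if `η y < N - ℓ_N`, it is
at most `|S|^α N^(-α)` times a tail of `∑ G_y`. So `Z_N` tends to `κ⋆ ∑' j, G_x j`, which is `κ⋆`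
times the limit of the numerator.
-/

open Finset Filter Topology

section PartitionSum

variable {S : Type*} [DecidableEq S]

def partitionSum (f : S → ℕ → ℝ) (T : Finset S) (n : ℕ) : ℝ :=
  ∑ η ∈ piAntidiag T n, ∏ y ∈ T, f y (η y)

theorem partitionSum_nonneg {f : S → ℕ → ℝ} {T : Finset S} (hf : ∀ y ∈ T, ∀ n, 0 ≤ f y n)
    (n : ℕ) : 0 ≤ partitionSum f T n :=
  sum_nonneg fun η _ => prod_nonneg fun y hy => hf y hy (η y)

theorem sum_piAntidiag_cons_mul_prod (f : S → ℕ → ℝ) (g : ℕ → ℝ) {x : S} {T : Finset S}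
    (hx : x ∉ T) (n : ℕ) :
    ∑ η ∈ piAntidiag (cons x T hx) n, g (η x) * ∏ y ∈ T, f y (η y) =
      ∑ p ∈ antidiagonal n, g p.1 * partitionSum f T p.2 := by
  rw [piAntidiag_cons, sum_disjiUnion]
  refine sum_congr rfl fun p _ => ?_
  rw [sum_map, partitionSum, mul_sum]
  refine sum_congr rfl fun η hη => ?_
  have hηx : η x = 0 := by_contra fun h => hx ((mem_piAntidiag.1 hη).2 x h)
  have hT : ∀ y ∈ T, y ≠ x := fun y hy h => hx (h ▸ hy)
  simp only [addRightEmbedding_apply, Pi.add_apply, if_pos, hηx, zero_add]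
  congr 1
  exact prod_congr rfl fun y hy => by simp [hT y hy]

theorem partitionSum_cons (f : S → ℕ → ℝ) {x : S} {T : Finset S} (hx : x ∉ T) (n : ℕ) :
    partitionSum f (cons x T hx) n = ∑ p ∈ antidiagonal n, f x p.1 * partitionSum f T p.2 := by
  rw [← sum_piAntidiag_cons_mul_prod f (f x) hx]
  exact sum_congr rfl fun η _ => prod_cons ..

theorem hasSum_partitionSum {f : S → ℕ → ℝ} {T : Finset S} (hf0 : ∀ y ∈ T, ∀ n, 0 ≤ f y n)
    (hf : ∀ y ∈ T, Summable (f y)) : HasSum (partitionSum f T) (∏ y ∈ T, ∑' n, f y n) := by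
  induction T using Finset.cons_induction with
  | empty =>
    rw [prod_empty]
    convert hasSum_ite_eq 0 (1 : ℝ) with n
    rw [partitionSum, piAntidiag_empty]
    split_ifs <;> simp
  | cons x T hx ih =>
    have hT := ih (fun y hy => hf0 y (mem_cons_of_mem hy)) fun y hy => hf y (mem_cons_of_mem hy)
    have hfx := hf x (mem_cons_self x T)
    have hprod : Summable fun p : ℕ × ℕ => f x p.1 * partitionSum f T p.2 :=
      hfx.mul_of_nonneg hT.summable (hf0 x (mem_cons_self x T))
        (partitionSum_nonneg fun y hy => hf0 y (mem_cons_of_mem hy))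
    rw [prod_cons, ← hT.tsum_eq, hfx.tsum_mul_tsum_eq_tsum_sum_antidiagonal hT.summable hprod,
      funext (partitionSum_cons f hx)]
    exact (summable_sum_mul_antidiagonal_of_summable_mul hprod).hasSum

theorem confs_eq_piAntidiag [Fintype S] (N : ℕ) : confs S N = piAntidiag univ N := by
  ext η
  simp only [confs, mem_filter, Fintype.mem_piFinset, mem_range, mem_piAntidiag, mem_univ,
    implies_true, and_true, and_iff_right_iff_imp]
  exact fun h y => Nat.lt_succ_of_le (h ▸ single_le_sum (fun _ _ => Nat.zero_le _) (mem_univ y))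

theorem sum_confs_filter_prod [Fintype S] (f : S → ℕ → ℝ) (x : S) (P : ℕ → Prop)
    [DecidablePred P] (N : ℕ) :
    ∑ η ∈ (confs S N).filter (fun η => P (η x)), ∏ y, f y (η y) =
      ∑ p ∈ (antidiagonal N).filter (fun p => P p.1),
        f x p.1 * partitionSum f (univ.erase x) p.2 := by
  set T := univ.erase x
  have huniv : (univ : Finset S) = cons x T (notMem_erase x univ) := by simp [T]
  rw [sum_filter, sum_filter, confs_eq_piAntidiag, huniv]
  simp only [prod_cons, ← ite_zero_mul]
  exact sum_piAntidiag_cons_mul_prod f (fun k => if P k then f x k else 0) _ N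

end PartitionSum

section Convolution

theorem sum_antidiagonal_filter_snd_le (G : ℕ → ℝ) {ℓ N : ℕ} (h : ℓ ≤ N) :
    ∑ p ∈ (antidiagonal N).filter (fun p => p.2 ≤ ℓ), G p.2 = ∑ j ∈ range (ℓ + 1), G j := by
  rw [Nat.antidiagonal_filter_snd_le_of_le h, sum_map]
  calc ∑ p ∈ antidiagonal ℓ, G p.2 = ∑ p ∈ antidiagonal ℓ, G p.1 :=
        Nat.sum_antidiagonal_swap (f := fun p => G p.1)
    _ = ∑ j ∈ range (ℓ + 1), G j := Nat.sum_antidiagonal_eq_sum_range_succ (fun i _ => G i) ℓ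

variable {G : ℕ → ℝ}

theorem sum_antidiagonal_filter_le_tsum_nat_add (hG0 : ∀ n, 0 ≤ G n) (hG : Summable G)
    {N M : ℕ} (P : ℕ × ℕ → Prop) [DecidablePred P] (hP : ∀ p ∈ antidiagonal N, P p → M ≤ p.2) :
    ∑ p ∈ (antidiagonal N).filter P, G p.2 ≤ ∑' j, G (j + M) := by
  set s := (antidiagonal N).filter P
  have hM : ∀ p ∈ s, M ≤ p.2 := fun p hp => hP p (mem_filter.1 hp).1 (mem_filter.1 hp).2
  have hinj : Set.InjOn (fun p : ℕ × ℕ => p.2 - M) s := by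
    intro p hp q hq hpq
    have h2 : p.2 = q.2 := by have := hM p hp; have := hM q hq; simp only at hpq; omega
    exact (HasAntidiagonal.antidiagonal_congr' (mem_filter.1 hp).1 (mem_filter.1 hq).1).2 h2
  calc ∑ p ∈ s, G p.2 = ∑ p ∈ s, G (p.2 - M + M) :=
        sum_congr rfl fun p hp => by rw [Nat.sub_add_cancel (hM p hp)]
    _ = ∑ j ∈ s.image (fun p => p.2 - M), G (j + M) :=
        (sum_image (f := fun j => G (j + M)) hinj).symm
    _ ≤ ∑' j, G (j + M) :=
        ((summable_nat_add_iff M).2 hG).sum_le_tsum _ fun j _ => hG0 _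

theorem eventually_mul_lt_of_tendsto_div {ℓ : ℕ → ℕ}
    (hℓN : Tendsto (fun N : ℕ => (ℓ N : ℝ) / N) atTop (𝓝 0)) (c : ℕ) :
    ∀ᶠ N in atTop, c * ℓ N < N := by
  have h := hℓN.eventually (gt_mem_nhds (show (0 : ℝ) < 1 / (c + 1) by positivity))
  filter_upwards [h, eventually_gt_atTop 0] with N hN hN0
  rw [div_lt_div_iff₀ (by exact_mod_cast hN0) (by positivity)] at hN
  have : (c : ℝ) * ℓ N < N := by nlinarith [(ℓ N).cast_nonneg (α := ℝ)]
  exact_mod_cast this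

theorem tendsto_div_sub_of_tendsto_div {ℓ : ℕ → ℕ}
    (hℓN : Tendsto (fun N : ℕ => (ℓ N : ℝ) / N) atTop (𝓝 0)) :
    Tendsto (fun N : ℕ => (N : ℝ) / (N - ℓ N : ℕ)) atTop (𝓝 1) := by
  have h := ((tendsto_const_nhds (x := (1 : ℝ))).sub hℓN).inv₀ (by norm_num)
  rw [sub_zero, inv_one] at h
  refine h.congr' ?_
  filter_upwards [eventually_mul_lt_of_tendsto_div hℓN 1] with N hN
  rw [Nat.cast_sub (by omega), one_sub_div (by exact_mod_cast (by omega : N ≠ 0)), inv_div]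

theorem tendsto_rpow_mul_sum_antidiagonal_head {α : ℝ} (hα : 0 ≤ α) {u : ℕ → ℝ}
    (hu : ∀ k ≠ 0, u k = ((k : ℝ) ^ α)⁻¹) (hG0 : ∀ n, 0 ≤ G n) (hG : Summable G)
    {ℓ : ℕ → ℕ} (hℓ : Tendsto ℓ atTop atTop)
    (hℓN : Tendsto (fun N : ℕ => (ℓ N : ℝ) / N) atTop (𝓝 0)) :
    Tendsto (fun N : ℕ => (N : ℝ) ^ α *
      ∑ p ∈ (antidiagonal N).filter (fun p => N - ℓ N ≤ p.1), u p.1 * G p.2)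
      atTop (𝓝 (∑' j, G j)) := by
  set ρ : ℕ → ℝ := fun N => ((N : ℝ) / (N - ℓ N : ℕ)) ^ α
  have hρ : Tendsto ρ atTop (𝓝 1) := by
    simpa using (tendsto_div_sub_of_tendsto_div hℓN).rpow_const (Or.inr hα)
  have hs : Tendsto (fun N => ∑ j ∈ range (ℓ N + 1), G j) atTop (𝓝 (∑' j, G j)) :=
    hG.hasSum.tendsto_sum_nat.comp ((tendsto_add_atTop_nat 1).comp hℓ)
  have hweight : ∀ᶠ N : ℕ in atTop, ∀ p ∈ (antidiagonal N).filter (fun p => N - ℓ N ≤ p.1),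
      1 ≤ (N : ℝ) ^ α * u p.1 ∧ (N : ℝ) ^ α * u p.1 ≤ ρ N := by
    filter_upwards [eventually_mul_lt_of_tendsto_div hℓN 1] with N hN p hp
    rw [mem_filter, HasAntidiagonal.mem_antidiagonal] at hp
    have hp1 : (0 : ℝ) < p.1 := by exact_mod_cast (by omega : 0 < p.1)
    rw [hu p.1 (by omega), ← div_eq_mul_inv, ← Real.div_rpow (by positivity) hp1.le]
    constructor
    · exact Real.one_le_rpow ((one_le_div hp1).2 (by exact_mod_cast (by omega : p.1 ≤ N))) hα
    · refine Real.rpow_le_rpow (by positivity) (div_le_div_of_nonneg_left (by positivity)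
        (by exact_mod_cast (by omega : 0 < N - ℓ N)) ?_) hα
      exact_mod_cast (by omega : N - ℓ N ≤ p.1)
  have hhead : ∀ᶠ N : ℕ in atTop,
      ∑ p ∈ (antidiagonal N).filter (fun p => N - ℓ N ≤ p.1), G p.2 =
        ∑ j ∈ range (ℓ N + 1), G j := by
    filter_upwards [eventually_mul_lt_of_tendsto_div hℓN 1] with N hN
    rw [← sum_antidiagonal_filter_snd_le G (by omega : ℓ N ≤ N)]
    refine sum_congr (filter_congr fun p hp => ?_) fun _ _ => rfl
    rw [HasAntidiagonal.mem_antidiagonal] at hp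
    omega
  refine tendsto_of_tendsto_of_tendsto_of_le_of_le' hs (by simpa using hρ.mul hs) ?_ ?_
  · filter_upwards [hweight, hhead] with N hw hh
    rw [← hh, mul_sum]
    refine sum_le_sum fun p hp => ?_
    rw [← mul_assoc]
    exact le_mul_of_one_le_left (hG0 _) (hw p hp).1
  · filter_upwards [hweight, hhead] with N hw hh
    rw [← hh, mul_sum, mul_sum]
    refine sum_le_sum fun p hp => ?_
    rw [← mul_assoc]
    exact mul_le_mul_of_nonneg_right (hw p hp).2 (hG0 _)

theorem tendsto_rpow_mul_sum_antidiagonal_head_of_geometric {α q : ℝ} (hα : 0 ≤ α)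
    (hq0 : 0 ≤ q) (hq1 : q < 1) {u : ℕ → ℝ} (hu0 : ∀ k, 0 ≤ u k)
    (hu : ∀ k ≠ 0, u k ≤ q ^ k * ((k : ℝ) ^ α)⁻¹) (hG0 : ∀ n, 0 ≤ G n) (hG : Summable G)
    {ℓ : ℕ → ℕ} (hℓ : Tendsto ℓ atTop atTop)
    (hℓN : Tendsto (fun N : ℕ => (ℓ N : ℝ) / N) atTop (𝓝 0)) :
    Tendsto (fun N : ℕ => (N : ℝ) ^ α *
      ∑ p ∈ (antidiagonal N).filter (fun p => N - ℓ N ≤ p.1), u p.1 * G p.2)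
      atTop (𝓝 0) := by
  have hpower := tendsto_rpow_mul_sum_antidiagonal_head hα (u := fun k => ((k : ℝ) ^ α)⁻¹)
    (fun _ _ => rfl) hG0 hG hℓ hℓN
  have hgap : Tendsto (fun N => N - ℓ N) atTop atTop := by
    refine tendsto_atTop.2 fun b => ?_
    filter_upwards [eventually_mul_lt_of_tendsto_div hℓN 2, eventually_ge_atTop (2 * b)]
      with N h1 h2
    omega
  have hgeom := ((tendsto_pow_atTop_nhds_zero_of_lt_one hq0 hq1).comp hgap).mul hpower
  rw [zero_mul] at hgeom
  refine squeeze_zero' (Eventually.of_forall fun N => mul_nonneg (by positivity)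
    (sum_nonneg fun p _ => mul_nonneg (hu0 _) (hG0 _))) ?_ hgeom
  filter_upwards [eventually_mul_lt_of_tendsto_div hℓN 1] with N hN
  simp only [Function.comp_apply]
  calc (N : ℝ) ^ α * ∑ p ∈ (antidiagonal N).filter (fun p => N - ℓ N ≤ p.1), u p.1 * G p.2
      ≤ (N : ℝ) ^ α * ∑ p ∈ (antidiagonal N).filter (fun p => N - ℓ N ≤ p.1),
          q ^ (N - ℓ N) * (((p.1 : ℝ) ^ α)⁻¹ * G p.2) := by
        refine mul_le_mul_of_nonneg_left (sum_le_sum fun p hp => ?_) (by positivity)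
        rw [mem_filter, HasAntidiagonal.mem_antidiagonal] at hp
        rw [← mul_assoc]
        refine mul_le_mul_of_nonneg_right ((hu p.1 (by omega)).trans ?_) (hG0 _)
        exact mul_le_mul_of_nonneg_right (pow_le_pow_of_le_one hq0 hq1.le hp.2) (by positivity)
    _ = _ := by rw [← mul_sum]; ring

theorem tendsto_rpow_mul_sum_antidiagonal_bulk {α : ℝ} (hα : 0 ≤ α) {u : ℕ → ℝ}
    (hu0 : ∀ k, 0 ≤ u k) (hu : ∀ k ≠ 0, u k ≤ ((k : ℝ) ^ α)⁻¹) (hG0 : ∀ n, 0 ≤ G n)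
    (hG : Summable G) {ℓ : ℕ → ℕ} (hℓ : Tendsto ℓ atTop atTop) (c : ℕ) :
    Tendsto (fun N : ℕ => (N : ℝ) ^ α *
      ∑ p ∈ (antidiagonal N).filter (fun p => N ≤ c * p.1 ∧ p.1 + ℓ N < N), u p.1 * G p.2)
      atTop (𝓝 0) := by
  have htail : Tendsto (fun N => (c : ℝ) ^ α * ∑' j, G (j + (ℓ N + 1))) atTop (𝓝 0) := by
    simpa using ((tendsto_sum_nat_add G).comp ((tendsto_add_atTop_nat 1).comp hℓ)).const_mul
      ((c : ℝ) ^ α)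
  refine squeeze_zero (fun N => mul_nonneg (by positivity)
    (sum_nonneg fun p _ => mul_nonneg (hu0 _) (hG0 _))) (fun N => ?_) htail
  have hweight : ∀ p ∈ (antidiagonal N).filter (fun p => N ≤ c * p.1 ∧ p.1 + ℓ N < N),
      (N : ℝ) ^ α * u p.1 ≤ (c : ℝ) ^ α := by
    intro p hp
    rw [mem_filter] at hp
    have hp1 : p.1 ≠ 0 := fun h => by simp only [h, mul_zero] at hp; omega
    have hp1' : (0 : ℝ) < p.1 := by exact_mod_cast Nat.pos_of_ne_zero hp1
    calc (N : ℝ) ^ α * u p.1 ≤ ((c : ℝ) * p.1) ^ α * ((p.1 : ℝ) ^ α)⁻¹ :=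
          mul_le_mul (Real.rpow_le_rpow (by positivity) (by exact_mod_cast hp.2.1) hα)
            (hu _ hp1) (hu0 _) (by positivity)
      _ = (c : ℝ) ^ α := by
          rw [Real.mul_rpow (by positivity) hp1'.le, mul_assoc,
            mul_inv_cancel₀ (by positivity), mul_one]
  calc (N : ℝ) ^ α * ∑ p ∈ (antidiagonal N).filter (fun p => N ≤ c * p.1 ∧ p.1 + ℓ N < N),
        u p.1 * G p.2
      = ∑ p ∈ (antidiagonal N).filter (fun p => N ≤ c * p.1 ∧ p.1 + ℓ N < N),
          (N : ℝ) ^ α * u p.1 * G p.2 := by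
        rw [mul_sum]; simp only [mul_assoc]
    _ ≤ ∑ p ∈ (antidiagonal N).filter (fun p => N ≤ c * p.1 ∧ p.1 + ℓ N < N),
          (c : ℝ) ^ α * G p.2 :=
        sum_le_sum fun p hp => mul_le_mul_of_nonneg_right (hweight p hp) (hG0 _)
    _ ≤ (c : ℝ) ^ α * ∑' j, G (j + (ℓ N + 1)) := by
        rw [← mul_sum]
        refine mul_le_mul_of_nonneg_left (sum_antidiagonal_filter_le_tsum_nat_add hG0 hG _
          fun p hp hP => ?_) (by positivity)
        rw [HasAntidiagonal.mem_antidiagonal] at hp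
        omega

end Convolution

section SiteWeight

theorem aZR_pos (α : ℝ) (n : ℕ) : 0 < aZR α n := by
  unfold aZR
  split_ifs with h
  · exact one_pos
  · exact Real.rpow_pos_of_pos (by exact_mod_cast Nat.pos_of_ne_zero h) α

theorem summable_inv_aZR {α : ℝ} (hα : 1 < α) : Summable fun n => (aZR α n)⁻¹ := by
  refine (summable_nat_add_iff 1).1 ?_
  exact ((summable_nat_add_iff 1).2 (Real.summable_nat_rpow_inv.2 hα)).congr fun n => by
    simp [aZR]

noncomputable def zrWeight (α q : ℝ) (n : ℕ) : ℝ := q ^ n / aZR α n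

variable {α q : ℝ}

theorem zrWeight_nonneg (hq : 0 ≤ q) (n : ℕ) : 0 ≤ zrWeight α q n :=
  div_nonneg (pow_nonneg hq n) (aZR_pos α n).le

theorem zrWeight_of_ne_zero {n : ℕ} (hn : n ≠ 0) : zrWeight α q n = q ^ n * ((n : ℝ) ^ α)⁻¹ := by
  rw [zrWeight, aZR, if_neg hn, div_eq_mul_inv]

theorem summable_zrWeight (hα : 1 < α) (hq0 : 0 ≤ q) (hq1 : q ≤ 1) : Summable (zrWeight α q) :=
  (summable_inv_aZR hα).of_nonneg_of_le (zrWeight_nonneg hq0) fun n => by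
    rw [zrWeight, div_eq_mul_inv]
    exact mul_le_of_le_one_left (inv_nonneg.2 (aZR_pos α n).le) (pow_le_one₀ hq0 hq1)

theorem tsum_zrWeight_pos (hα : 1 < α) (hq0 : 0 ≤ q) (hq1 : q ≤ 1) :
    0 < ∑' n, zrWeight α q n :=
  (summable_zrWeight hα hq0 hq1).tsum_pos (zrWeight_nonneg hq0) 0
    (by simp [zrWeight, aZR])

end SiteWeight

section ZeroRange

variable {S : Type*} [Fintype S] [DecidableEq S] {α : ℝ} {q : S → ℝ} {ℓ : ℕ → ℕ}

theorem hasSum_partitionSum_zrWeight (hα : 1 < α) (hq0 : ∀ y, 0 ≤ q y) (hq1 : ∀ y, q y ≤ 1)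
    (x : S) : HasSum (partitionSum (fun y => zrWeight α (q y)) (univ.erase x))
      ((∏ y, ∑' n, zrWeight α (q y) n) / ∑' n, zrWeight α (q x) n) := by
  convert hasSum_partitionSum (fun y _ => zrWeight_nonneg (hq0 y))
    fun y _ => summable_zrWeight hα (hq0 y) (hq1 y)
  exact (eq_div_of_mul_eq (tsum_zrWeight_pos hα (hq0 x) (hq1 x)).ne'
    (prod_erase_mul univ (fun y => ∑' n, zrWeight α (q y) n) (mem_univ x))).symm

theorem sum_sum_confs_filter_le_sum_confs {w : (S → ℕ) → ℝ} (hw : ∀ η, 0 ≤ w η) {N ℓ : ℕ}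
    (h : 2 * ℓ < N) :
    ∑ y, ∑ η ∈ (confs S N).filter (fun η => N - ℓ ≤ η y), w η ≤ ∑ η ∈ confs S N, w η := by
  rw [← sum_biUnion]
  · exact sum_le_sum_of_subset_of_nonneg (biUnion_subset.2 fun y _ => filter_subset _ _)
      fun η _ _ => hw η
  · intro y _ z _ hyz
    refine disjoint_filter.2 fun η hη hy hz => ?_
    have hpair := sum_le_sum_of_subset (f := η) (subset_univ {y, z})
    rw [sum_pair hyz, (mem_filter.1 hη).2] at hpair
    omega

theorem sum_confs_le_sum_sum_confs_filter [Nonempty S] {w : (S → ℕ) → ℝ} (hw : ∀ η, 0 ≤ w η)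
    (N ℓ : ℕ) :
    ∑ η ∈ confs S N, w η ≤ ∑ y, (∑ η ∈ (confs S N).filter (fun η => N - ℓ ≤ η y), w η +
      ∑ η ∈ (confs S N).filter (fun η => N ≤ Fintype.card S * η y ∧ η y + ℓ < N), w η) := by
  simp only [sum_filter, ← sum_add_distrib]
  rw [sum_comm]
  refine sum_le_sum fun η hη => ?_
  obtain ⟨y, -, hy⟩ := exists_le_of_sum_le univ_nonempty (f := fun _ => N)
    (g := fun y => Fintype.card S * η y) (by simp [← mul_sum, (mem_filter.1 hη).2])
  refine le_trans ?_ (single_le_sum (fun z _ => add_nonneg (ite_nonneg (hw η) le_rfl)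
    (ite_nonneg (hw η) le_rfl)) (mem_univ y))
  by_cases hhead : N - ℓ ≤ η y
  · rw [if_pos hhead]
    exact le_add_of_nonneg_right (ite_nonneg (hw η) le_rfl)
  · simp [hhead, hy, show η y + ℓ < N by omega]

variable (hα : 1 < α) (hq0 : ∀ y, 0 ≤ q y) (hq1 : ∀ y, q y ≤ 1) (hℓ : Tendsto ℓ atTop atTop)
  (hℓN : Tendsto (fun N : ℕ => (ℓ N : ℝ) / N) atTop (𝓝 0))
include hα hq0 hq1 hℓ

theorem tendsto_rpow_mul_sum_confs_filter_bulk (c : ℕ) (x : S) :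
    Tendsto (fun N : ℕ => (N : ℝ) ^ α * ∑ η ∈ (confs S N).filter
      (fun η => N ≤ c * η x ∧ η x + ℓ N < N), ∏ y, zrWeight α (q y) (η y)) atTop (𝓝 0) := by
  have hG := hasSum_partitionSum_zrWeight hα hq0 hq1 x
  refine Tendsto.congr (fun N => ?_) (tendsto_rpow_mul_sum_antidiagonal_bulk
    (zero_lt_one.trans hα).le (zrWeight_nonneg (hq0 x))
    (fun k hk => (zrWeight_of_ne_zero hk).trans_le
      (mul_le_of_le_one_left (by positivity) (pow_le_one₀ (hq0 x) (hq1 x))))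
    (partitionSum_nonneg fun y _ => zrWeight_nonneg (hq0 y)) hG.summable hℓ c)
  rw [sum_confs_filter_prod _ x (fun k => N ≤ c * k ∧ k + ℓ N < N)]

include hℓN

theorem tendsto_rpow_mul_sum_confs_filter_head_of_eq_one {x : S} (hx : q x = 1) :
    Tendsto (fun N : ℕ => (N : ℝ) ^ α * ∑ η ∈ (confs S N).filter (fun η => N - ℓ N ≤ η x),
      ∏ y, zrWeight α (q y) (η y)) atTop
      (𝓝 ((∏ y, ∑' n, zrWeight α (q y) n) / ∑' n, zrWeight α 1 n)) := by
  have hG := hasSum_partitionSum_zrWeight hα hq0 hq1 x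
  rw [hx] at hG
  rw [← hG.tsum_eq]
  refine Tendsto.congr (fun N => ?_) (tendsto_rpow_mul_sum_antidiagonal_head
    (u := zrWeight α (q x)) (zero_lt_one.trans hα).le
    (fun k hk => by rw [zrWeight_of_ne_zero hk, hx, one_pow, one_mul])
    (partitionSum_nonneg fun y _ => zrWeight_nonneg (hq0 y)) hG.summable hℓ hℓN)
  rw [sum_confs_filter_prod _ x (fun k => N - ℓ N ≤ k)]

theorem tendsto_rpow_mul_sum_confs_filter_head_of_lt_one {x : S} (hx : q x < 1) :
    Tendsto (fun N : ℕ => (N : ℝ) ^ α * ∑ η ∈ (confs S N).filter (fun η => N - ℓ N ≤ η x),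
      ∏ y, zrWeight α (q y) (η y)) atTop (𝓝 0) := by
  have hG := hasSum_partitionSum_zrWeight hα hq0 hq1 x
  refine Tendsto.congr (fun N => ?_) (tendsto_rpow_mul_sum_antidiagonal_head_of_geometric
    (zero_lt_one.trans hα).le (hq0 x) hx (zrWeight_nonneg (hq0 x))
    (fun k hk => (zrWeight_of_ne_zero hk).le)
    (partitionSum_nonneg fun y _ => zrWeight_nonneg (hq0 y)) hG.summable hℓ hℓN)
  rw [sum_confs_filter_prod _ x (fun k => N - ℓ N ≤ k)]

theorem tendsto_rpow_mul_sum_confs [Nonempty S] :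
    Tendsto (fun N : ℕ => (N : ℝ) ^ α * ∑ η ∈ confs S N, ∏ y, zrWeight α (q y) (η y)) atTop
      (𝓝 (#{y | q y = 1} * ((∏ y, ∑' n, zrWeight α (q y) n) / ∑' n, zrWeight α 1 n))) := by
  set L := (∏ y, ∑' n, zrWeight α (q y) n) / ∑' n, zrWeight α 1 n
  set w : (S → ℕ) → ℝ := fun η => ∏ y, zrWeight α (q y) (η y)
  have hw : ∀ η, 0 ≤ w η := fun η => prod_nonneg fun y _ => zrWeight_nonneg (hq0 y) _
  have hhead : Tendsto (fun N : ℕ => ∑ y, (N : ℝ) ^ α *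
      ∑ η ∈ (confs S N).filter (fun η => N - ℓ N ≤ η y), w η) atTop
      (𝓝 (∑ y, if q y = 1 then L else 0)) := by
    refine tendsto_finsetSum _ fun y _ => ?_
    split_ifs with hy
    · exact tendsto_rpow_mul_sum_confs_filter_head_of_eq_one hα hq0 hq1 hℓ hℓN hy
    · exact tendsto_rpow_mul_sum_confs_filter_head_of_lt_one hα hq0 hq1 hℓ hℓN
        ((hq1 y).lt_of_ne hy)
  rw [← sum_filter, sum_const, nsmul_eq_mul] at hhead
  have hbulk : Tendsto (fun N : ℕ => ∑ y, (N : ℝ) ^ α * ∑ η ∈ (confs S N).filter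
      (fun η => N ≤ Fintype.card S * η y ∧ η y + ℓ N < N), w η) atTop (𝓝 0) := by
    simpa using tendsto_finsetSum univ fun y _ =>
      tendsto_rpow_mul_sum_confs_filter_bulk hα hq0 hq1 hℓ (Fintype.card S) y
  refine tendsto_of_tendsto_of_tendsto_of_le_of_le' hhead
    (by simpa only [add_zero] using hhead.add hbulk) ?_ (Eventually.of_forall fun N => ?_)
  · filter_upwards [eventually_mul_lt_of_tendsto_div hℓN 2] with N hN
    rw [← mul_sum]
    exact mul_le_mul_of_nonneg_left (sum_sum_confs_filter_le_sum_confs hw hN) (by positivity)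
  · rw [← mul_sum, ← mul_sum, ← mul_add, ← sum_add_distrib]
    exact mul_le_mul_of_nonneg_left (sum_confs_le_sum_sum_confs_filter hw N (ℓ N)) (by positivity)

end ZeroRange

theorem condensation_probability_limit_general (S : Type*) [Fintype S] [DecidableEq S]
    (α : ℝ) (hα : 1 < α)
    (m : S → ℝ) (hm : ∀ x, 0 < m x)
    (Mstar : ℝ) (hMstar : IsGreatest (Set.range m) Mstar)
    (Sstar : Finset S) (hSstar : Sstar = Finset.univ.filter (fun x => m x = Mstar))
    (κstar : ℕ) (hκstar : κstar = Sstar.card)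
    (mstar : S → ℝ) (hmstar : ∀ x, mstar x = m x / Mstar)
    (Z : ℕ → ℝ) (hZ : ∀ N, Z N = (N : ℝ) ^ α *
      ∑ η ∈ confs S N, ∏ x, mstar x ^ η x / aZR α (η x))
    (μ : ℕ → (S → ℕ) → ℝ)
    (hμ : ∀ N η, μ N η = (N : ℝ) ^ α / Z N * ∏ x, mstar x ^ η x / aZR α (η x))
    (ℓ : ℕ → ℕ) (hℓ : Filter.Tendsto ℓ Filter.atTop Filter.atTop)
    (hℓN : Filter.Tendsto (fun N : ℕ => (ℓ N : ℝ) / (N : ℝ)) Filter.atTop (nhds 0))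
    (x : S) (hx : x ∈ Sstar) :
    Filter.Tendsto
      (fun N => ∑ η ∈ (confs S N).filter (fun η => N - ℓ N ≤ η x), μ N η)
      Filter.atTop (nhds (1 / (κstar : ℝ))) := by
  have : Nonempty S := ⟨x⟩
  have hM : 0 < Mstar := (hm x).trans_le (hMstar.2 ⟨x, rfl⟩)
  have hq0 : ∀ y, 0 ≤ mstar y := fun y => by rw [hmstar]; exact div_nonneg (hm y).le hM.le
  have hq1 : ∀ y, mstar y ≤ 1 := fun y => by
    rw [hmstar]; exact div_le_one_of_le₀ (hMstar.2 ⟨y, rfl⟩) hM.le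
  have hSstar' : Sstar = univ.filter fun y => mstar y = 1 := by
    simp only [hSstar, hmstar, div_eq_one_iff_eq hM.ne']
  have hκ : (0 : ℝ) < κstar := by rw [hκstar]; exact_mod_cast card_pos.2 ⟨x, hx⟩
  have hnum := tendsto_rpow_mul_sum_confs_filter_head_of_eq_one hα hq0 hq1 hℓ hℓN
    (x := x) (by simpa [hSstar'] using hx)
  have hden := tendsto_rpow_mul_sum_confs hα hq0 hq1 hℓ hℓN (S := S)
  rw [← hSstar', ← hκstar] at hden
  have hL : 0 < (∏ y, ∑' n, zrWeight α (mstar y) n) / ∑' n, zrWeight α 1 n :=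
    div_pos (prod_pos fun y _ => tsum_zrWeight_pos hα (hq0 y) (hq1 y))
      (tsum_zrWeight_pos hα zero_le_one le_rfl)
  have hlim := hnum.div hden (mul_pos hκ hL).ne'
  rw [div_mul_cancel_right₀ hL.ne', ← one_div] at hlim
  refine hlim.congr fun N => ?_
  simp only [Pi.div_apply, hμ, ← mul_sum, hZ N]
  exact (div_mul_eq_mul_div _ _ _).symm

theorem condensation_probability_limit (S : Type*) [Fintype S] [DecidableEq S]
    (hκ : 2 ≤ Fintype.card S) (α : ℝ) (hα : 1 < α)
    (m : S → ℝ) (hm : ∀ x, 0 < m x) (hm1 : ∑ x, m x = 1)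
    (Mstar : ℝ) (hMstar : IsGreatest (Set.range m) Mstar)
    (Sstar : Finset S) (hSstar : Sstar = Finset.univ.filter (fun x => m x = Mstar))
    (κstar : ℕ) (hκstar : κstar = Sstar.card)
    (mstar : S → ℝ) (hmstar : ∀ x, mstar x = m x / Mstar)
    (Z : ℕ → ℝ) (hZ : ∀ N, Z N = (N : ℝ) ^ α *
      ∑ η ∈ confs S N, ∏ x, mstar x ^ η x / aZR α (η x))
    (μ : ℕ → (S → ℕ) → ℝ)
    (hμ : ∀ N η, μ N η = (N : ℝ) ^ α / Z N * ∏ x, mstar x ^ η x / aZR α (η x))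
    (ℓ : ℕ → ℕ) (hℓ : Filter.Tendsto ℓ Filter.atTop Filter.atTop)
    (hℓN : Filter.Tendsto (fun N : ℕ => (ℓ N : ℝ) / (N : ℝ)) Filter.atTop (nhds 0))
    (x : S) (hx : x ∈ Sstar) :
    Filter.Tendsto
      (fun N => ∑ η ∈ (confs S N).filter (fun η => N - ℓ N ≤ η x), μ N η)
      Filter.atTop (nhds (1 / (κstar : ℝ))) :=
  condensation_probability_limit_general S α hα m hm Mstar hMstar Sstar hSstar κstar hκstar mstar
    hmstar Z hZ μ hμ ℓ hℓ hℓN x hx
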